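/- Let w be an infinite word over {1,…,d} in which all d letters occur, and suppose the letter frequencies f₁,…,f_d exist and are linearly independent over ℚ. Then p_w(n) ≥ (d−1)n + 1 for every n ≥ 1. -/
import Mathlib


def factorAt {A : Type*} (w : ℕ → A) (i n : ℕ) : List A :=
  (List.range n).map fun k => w (i + k)

def factors {A : Type*} (w : ℕ → A) (n : ℕ) : Set (List A) :=
  {u | ∃ i, u = factorAt w i n}

noncomputable def complexity {A : Type*} (w : ℕ → A) (n : ℕ) : ℕ :=
  (factors w n).ncard

/-- Number of occurrences of the letter `a` among the first `n` letters of `w`. -/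
def prefCount {d : ℕ} (w : ℕ → Fin d) (n : ℕ) (a : Fin d) : ℕ :=
  ((Finset.range n).filter fun i => w i = a).card

open Filter

section AuxLemmas

variable {A : Type*}

lemma factorAt_length (w : ℕ → A) (i n : ℕ) : (factorAt w i n).length = n := by
  simp [factorAt]

lemma factorAt_cons (w : ℕ → A) (i n : ℕ) :
    factorAt w i (n + 1) = w i :: factorAt w (i + 1) n := by
  simp only [factorAt, List.range_succ_eq_map, List.map_cons, List.map_map]
  refine congrArg₂ _ (by rw [Nat.add_zero]) ?_
  refine List.map_congr_left fun k _ => ?_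
  simp [Function.comp, Nat.add_assoc, Nat.add_comm 1 k]

lemma factorAt_snoc (w : ℕ → A) (i n : ℕ) :
    factorAt w i (n + 1) = factorAt w i n ++ [w (i + n)] := by
  simp [factorAt, List.range_succ]

lemma factorAt_take (w : ℕ → A) (i n : ℕ) :
    (factorAt w i (n + 1)).take n = factorAt w i n := by
  rw [factorAt_snoc, List.take_left' (factorAt_length w i n)]

lemma factorAt_tail (w : ℕ → A) (i n : ℕ) :
    (factorAt w i (n + 1)).tail = factorAt w (i + 1) n := by
  rw [factorAt_cons]; rfl

lemma factorAt_headD (w : ℕ → A) (i n : ℕ) (a : A) :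
    (factorAt w i (n + 1)).headD a = w i := by
  rw [factorAt_cons]; rfl

lemma factors_finite (d n : ℕ) (w : ℕ → Fin d) : (factors w n).Finite := by
  refine (List.finite_length_eq (Fin d) n).subset ?_
  rintro u ⟨i, rfl⟩
  exact factorAt_length w i n

end AuxLemmas

/-- The key step: if letter frequencies exist and are rationally independent, then the
complexity increases by at least `d - 1` at each step. -/
lemma complexity_step (d : ℕ) (w : ℕ → Fin d) (f : Fin d → ℝ)
    (hf : ∀ a, Filter.Tendsto (fun n => (prefCount w n a : ℝ) / n)
      Filter.atTop (nhds (f a)))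
    (hind : LinearIndependent ℚ f) (N : ℕ) :
    complexity w N + (d - 1) ≤ complexity w (N + 1) := by
  by_contra hcon
  push_neg at hcon
  have hd : 0 < d := (w 0).pos
  have hVfin : (factors w N).Finite := factors_finite d N w
  have hEfin : (factors w (N + 1)).Finite := factors_finite d (N + 1) w
  haveI : Fintype ↥(factors w N) := hVfin.fintype
  haveI : Fintype ↥(factors w (N + 1)) := hEfin.fintype
  have hV : Fintype.card ↥(factors w N) = complexity w N := by
    rw [complexity, ← Nat.card_coe_set_eq, Nat.card_eq_fintype_card]
  have hE : Fintype.card ↥(factors w (N + 1)) = complexity w (N + 1) := by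
    rw [complexity, ← Nat.card_coe_set_eq, Nat.card_eq_fintype_card]
  -- vertices and edges along the word
  let vtx : ℕ → ↥(factors w N) := fun i => ⟨factorAt w i N, ⟨i, rfl⟩⟩
  let edg : ℕ → ↥(factors w (N + 1)) := fun i => ⟨factorAt w i (N + 1), ⟨i, rfl⟩⟩
  let src : ↥(factors w (N + 1)) → ↥(factors w N) := fun e =>
    ⟨e.val.take N, by
      obtain ⟨i, hi⟩ := e.2
      exact ⟨i, by rw [hi, factorAt_take]⟩⟩
  let tgt : ↥(factors w (N + 1)) → ↥(factors w N) := fun e =>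
    ⟨e.val.tail, by
      obtain ⟨i, hi⟩ := e.2
      exact ⟨i + 1, by rw [hi, factorAt_tail]⟩⟩
  let hed : ↥(factors w (N + 1)) → Fin d := fun e => e.val.headD (w 0)
  have hsrc : ∀ i, src (edg i) = vtx i := fun i => Subtype.ext (factorAt_take w i N)
  have htgt : ∀ i, tgt (edg i) = vtx (i + 1) := fun i => Subtype.ext (factorAt_tail w i N)
  have hhed : ∀ i, hed (edg i) = w i := fun i => factorAt_headD w i N (w 0)
  -- the linear map whose kernel gives the invariant
  let Θ : ((Fin d → ℚ) × (↥(factors w N) → ℚ)) →ₗ[ℚ]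
      ((↥(factors w (N + 1)) → ℚ) × ℚ) :=
    { toFun := fun p => (fun e => p.1 (hed e) + p.2 (tgt e) - p.2 (src e), p.2 (vtx 0))
      map_add' := by
        intro p r
        refine Prod.ext (funext fun e => ?_) rfl
        simp only [Prod.fst_add, Prod.snd_add, Pi.add_apply]
        ring
      map_smul' := by
        intro c p
        refine Prod.ext (funext fun e => ?_) rfl
        simp only [Prod.smul_fst, Prod.smul_snd, Pi.smul_apply, smul_eq_mul,
          RingHom.id_apply]
        ring }
  have hninj : ¬ Function.Injective Θ := by
    intro hinj
    have hle := LinearMap.finrank_le_finrank_of_injective hinj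
    simp only [Module.finrank_prod, Module.finrank_pi, Module.finrank_self,
      Fintype.card_fin] at hle
    omega
  obtain ⟨x, y, hxy, hne⟩ := Function.not_injective_iff.mp hninj
  have hΘ : Θ (x - y) = 0 := by rw [map_sub, hxy, sub_self]
  set q : Fin d → ℚ := x.1 - y.1 with hqdef
  set g : ↥(factors w N) → ℚ := x.2 - y.2 with hgdef
  have hedge : ∀ e, q (hed e) + g (tgt e) - g (src e) = 0 := by
    intro e
    exact congrFun (congrArg Prod.fst hΘ) e
  have hg0 : g (vtx 0) = 0 := by
    exact congrArg Prod.snd hΘ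
  have hq : q ≠ 0 := by
    intro hq0
    have hgv : ∀ i, g (vtx i) = 0 := by
      intro i
      induction i with
      | zero => exact hg0
      | succ i ih =>
        have h := hedge (edg i)
        rw [hsrc, htgt, hhed, hq0] at h
        simp only [Pi.zero_apply, zero_add] at h
        linarith [h, ih]
    have hgz : g = 0 := by
      funext v
      obtain ⟨i, hi⟩ := v.2
      have := hgv i
      rwa [show vtx i = v from Subtype.ext hi.symm] at this
    apply hne
    have h1 : x.1 = y.1 := by rwa [← sub_eq_zero]
    have h2 : x.2 = y.2 := by rwa [← sub_eq_zero]
    exact Prod.ext h1 h2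
  -- telescoping sum
  have hsum : ∀ m, ∑ i ∈ Finset.range m, q (w i) = g (vtx 0) - g (vtx m) := by
    intro m
    induction m with
    | zero => simp
    | succ m ih =>
      rw [Finset.sum_range_succ, ih]
      have h := hedge (edg m)
      rw [hsrc, htgt, hhed] at h
      linarith [h]
  -- rewrite as a sum over letters
  have hsum2 : ∀ m, ∑ i ∈ Finset.range m, q (w i)
      = ∑ a : Fin d, (prefCount w m a : ℚ) * q a := by
    intro m
    rw [← Finset.sum_fiberwise' (Finset.range m) w q]
    refine Finset.sum_congr rfl fun a _ => ?_
    rw [Finset.sum_const, prefCount, nsmul_eq_mul]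
  -- bounded partial sums
  set C : ℝ := ∑ v : ↥(factors w N), |((g v : ℚ) : ℝ)| with hCdef
  have habs : ∀ v, |((g v : ℚ) : ℝ)| ≤ C := by
    intro v
    exact Finset.single_le_sum (f := fun v => |((g v : ℚ) : ℝ)|)
      (fun _ _ => abs_nonneg _) (Finset.mem_univ v)
  have hbound : ∀ m : ℕ, |((∑ i ∈ Finset.range m, q (w i) : ℚ) : ℝ)| ≤ 2 * C := by
    intro m
    rw [hsum m]
    push_cast
    calc |((g (vtx 0) : ℚ) : ℝ) - ((g (vtx m) : ℚ) : ℝ)|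
        ≤ |((g (vtx 0) : ℚ) : ℝ)| + |((g (vtx m) : ℚ) : ℝ)| := abs_sub _ _
      _ ≤ C + C := add_le_add (habs _) (habs _)
      _ = 2 * C := by ring
  have hC0 : 0 ≤ C := Finset.sum_nonneg fun _ _ => abs_nonneg _
  -- the averaged sums tend to 0
  have h0 : Tendsto (fun m : ℕ => ((∑ i ∈ Finset.range m, q (w i) : ℚ) : ℝ) / m)
      atTop (nhds 0) := by
    refine squeeze_zero_norm (a := fun m : ℕ => 2 * C / m)
      (fun m => ?_) (tendsto_const_div_atTop_nhds_zero_nat (2 * C))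
    rcases Nat.eq_zero_or_pos m with rfl | hm
    · simp
    · rw [Real.norm_eq_abs, abs_div, abs_of_nonneg (by positivity : (0:ℝ) ≤ (m:ℝ))]
      have hm' : (0:ℝ) < m := by exact_mod_cast hm
      exact (div_le_div_iff_of_pos_right hm').mpr (hbound m)
  -- the averaged sums tend to ∑ a, q a * f a
  have heq : ∀ m : ℕ, ((∑ i ∈ Finset.range m, q (w i) : ℚ) : ℝ) / m
      = ∑ a : Fin d, (q a : ℝ) * ((prefCount w m a : ℝ) / m) := by
    intro m
    rw [hsum2 m]
    push_cast
    rw [Finset.sum_div]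
    exact Finset.sum_congr rfl fun a _ => by ring
  have h1 : Tendsto (fun m : ℕ => ((∑ i ∈ Finset.range m, q (w i) : ℚ) : ℝ) / m)
      atTop (nhds (∑ a : Fin d, (q a : ℝ) * f a)) := by
    simp only [heq]
    exact tendsto_finset_sum _ fun a _ => (hf a).const_mul _
  have hzero : ∑ a : Fin d, (q a : ℝ) * f a = 0 := tendsto_nhds_unique h1 h0
  have hqz := Fintype.linearIndependent_iff.mp hind q (by
    rw [← hzero]
    exact Finset.sum_congr rfl fun a _ => Rat.smul_def _ _)
  exact hq (funext hqz)

theorem stmt17 (d : ℕ) (w : ℕ → Fin d) (hall : complexity w 1 = d)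
    (f : Fin d → ℝ)
    (hf : ∀ a, Filter.Tendsto (fun n => (prefCount w n a : ℝ) / n)
      Filter.atTop (nhds (f a)))
    (hind : LinearIndependent ℚ f) :
    ∀ n, 1 ≤ n → (d - 1) * n + 1 ≤ complexity w n := by
  have hd : 0 < d := (w 0).pos
  intro n hn
  induction n with
  | zero => omega
  | succ n ih =>
    rcases Nat.eq_zero_or_pos n with rfl | hn'
    · simp only [Nat.zero_add]
      rw [hall]
      omega
    · have h1 := ih hn'
      have h2 := complexity_step d w f hf hind n
      calc (d - 1) * (n + 1) + 1 = (d - 1) * n + 1 + (d - 1) := by ring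
        _ ≤ complexity w n + (d - 1) := Nat.add_le_add_right h1 _
        _ ≤ complexity w (n + 1) := h2
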